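/- Let β > 1 be simple with L = L(1). Then for every z ∈ ℂ with |z| < β one has (1 − (z/β)^L)·(1 − φ̂_β(z)) = 1 − φ_β(z); equivalently, 1 − φ̂_β(z) = (1 − φ_β(z))/(1 − (z/β)^L), the denominator being nonzero since |z/β| < 1. -/

import Mathlib

open scoped BigOperators

/-- The beta-map `x ↦ βx - ⌊βx⌋`. -/
noncomputable def tau (β x : ℝ) : ℝ := β * x - ⌊β * x⌋

/-- Greedy digit `a_n(β,x) = ⌊β·τ_β^{n-1}(x)⌋` (meaningful for `n ≥ 1`). -/
noncomputable def dig (β x : ℝ) (n : ℕ) : ℤ := ⌊β * (tau β)^[n - 1] x⌋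

/-- `x` is a simple point for `β`: some `τ_β^{n-1}(x)` lies in `{1/β, …, ⌊β⌋/β}`. -/
def IsSimplePt (β x : ℝ) : Prop :=
  ∃ n : ℕ, 1 ≤ n ∧ ∃ k : ℕ, 1 ≤ k ∧ (k : ℤ) ≤ ⌊β⌋ ∧ (tau β)^[n - 1] x = (k : ℝ) / β

/-- `L(x)`: the least `n ≥ 1` with `τ_β^{n-1}(x) ∈ {1/β, …, ⌊β⌋/β}`. -/
noncomputable def Lpt (β x : ℝ) : ℕ :=
  sInf {n : ℕ | 1 ≤ n ∧ ∃ k : ℕ, 1 ≤ k ∧ (k : ℤ) ≤ ⌊β⌋ ∧ (tau β)^[n - 1] x = (k : ℝ) / β}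

/-- `β` is simple if `x = 1` is a simple point for `β`. -/
def IsSimpleBeta (β : ℝ) : Prop := IsSimplePt β 1

open Classical in
/-- Quasi-greedy digit `d_n(β,1)` (meaningful for `n ≥ 1`): if `β` is simple with `L = L(1)`,
the periodic sequence repeating the block `(a_1, …, a_{L-1}, a_L - 1)`; otherwise `a_n(β,1)`. -/
noncomputable def qdig (β : ℝ) (n : ℕ) : ℤ :=
  if IsSimpleBeta β then
    (if (n - 1) % Lpt β 1 = Lpt β 1 - 1 then dig β 1 (Lpt β 1) - 1
     else dig β 1 ((n - 1) % Lpt β 1 + 1))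
  else dig β 1 n

/-- `φ_β(z) = Σ_{n≥1} a_n(β,1) β^{-n} z^n`. -/
noncomputable def phi (β : ℝ) (z : ℂ) : ℂ :=
  ∑' n : ℕ, (dig β 1 (n + 1) : ℂ) * (z / (β : ℂ)) ^ (n + 1)

/-- `φ̂_β(z) = Σ_{n≥1} d_n(β,1) β^{-n} z^n`. -/
noncomputable def phiHat (β : ℝ) (z : ℂ) : ℂ :=
  ∑' n : ℕ, (qdig β (n + 1) : ℂ) * (z / (β : ℂ)) ^ (n + 1)

/-- `ψ_β(z) = 1 + Σ_{n≥1} τ_β^n(1) β^{-n} z^n`. -/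
noncomputable def psi (β : ℝ) (z : ℂ) : ℂ :=
  1 + ∑' n : ℕ, (((tau β)^[n + 1] 1 : ℝ) : ℂ) * (z / (β : ℂ)) ^ (n + 1)

/-- `F_λ(x) = Σ_{n≥1} a_n(β,x)/(βλ)^n`. -/
noncomputable def Ffun (β : ℝ) (lam : ℂ) (x : ℝ) : ℂ :=
  ∑' n : ℕ, (dig β x (n + 1) : ℂ) / ((β : ℂ) * lam) ^ (n + 1)


/-! Write `w = z / β` and `L = L(1)`. Since `τ_β^{L-1}(1) = k/β`, the orbit of `1` reaches `0` at
time `L`, so `φ_β(z) = Σ_{n ≤ L} a_n w^n` is a polynomial. The quasi-greedy digits are `L`-periodic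
and agree with `a_1, …, a_L` except for `-1` at place `L`; splitting `φ̂_β` after `L` terms gives
`φ̂_β(z) = φ_β(z) - w^L + w^L φ̂_β(z)`, which rearranges to the identity. As `|w| < 1`, the bounded
digits make the series converge and `1 - w^L ≠ 0`. -/

open Set

section Digits

variable {β x : ℝ}

lemma tau_zero (β : ℝ) : tau β 0 = 0 := by
  simp [tau]

lemma tau_mem_Icc (β x : ℝ) : tau β x ∈ Icc (0 : ℝ) 1 :=
  ⟨Int.fract_nonneg (β * x), (Int.fract_lt_one (β * x)).le⟩

lemma iterate_tau_mem_Icc (hx : x ∈ Icc (0 : ℝ) 1) : ∀ m, (tau β)^[m] x ∈ Icc (0 : ℝ) 1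
  | 0 => hx
  | m + 1 => by rw [Function.iterate_succ_apply']; exact tau_mem_Icc β _

lemma dig_mem_Icc (hβ : 0 ≤ β) (hx : x ∈ Icc (0 : ℝ) 1) (n : ℕ) :
    dig β x n ∈ Icc 0 ⌊β⌋ := by
  obtain ⟨h0, h1⟩ := iterate_tau_mem_Icc (β := β) hx (n - 1)
  exact ⟨Int.floor_nonneg.mpr (mul_nonneg hβ h0),
    Int.floor_le_floor (mul_le_of_le_one_right hβ h1)⟩

lemma qdig_mem_Icc (hβ : 0 ≤ β) (n : ℕ) : qdig β n ∈ Icc (-1) ⌊β⌋ := by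
  have hdig (m : ℕ) := dig_mem_Icc hβ (x := 1) (by simp) m
  unfold qdig
  split_ifs
  · exact ⟨by linarith [(hdig (Lpt β 1)).1], by linarith [(hdig (Lpt β 1)).2]⟩
  · exact ⟨by linarith [(hdig ((n - 1) % Lpt β 1 + 1)).1], (hdig _).2⟩
  · exact ⟨by linarith [(hdig n).1], (hdig n).2⟩

lemma Lpt_spec (h : IsSimplePt β x) : 1 ≤ Lpt β x ∧
    ∃ k : ℕ, 1 ≤ k ∧ (k : ℤ) ≤ ⌊β⌋ ∧ (tau β)^[Lpt β x - 1] x = k / β :=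
  Nat.sInf_mem h

lemma iterate_tau_Lpt (hβ : β ≠ 0) (h : IsSimplePt β x) : (tau β)^[Lpt β x] x = 0 := by
  obtain ⟨hL, k, -, -, hk⟩ := Lpt_spec h
  rw [← Nat.sub_add_cancel hL, Function.iterate_succ_apply', hk, tau,
    mul_div_cancel₀ _ hβ]
  simp

lemma iterate_tau_eq_zero_of_Lpt_le (hβ : β ≠ 0) (h : IsSimplePt β x) {n : ℕ}
    (hn : Lpt β x ≤ n) : (tau β)^[n] x = 0 := by
  induction n, hn using Nat.le_induction with
  | base => exact iterate_tau_Lpt hβ h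
  | succ n _ ih => rw [Function.iterate_succ_apply', ih, tau_zero]

lemma dig_eq_zero_of_Lpt_lt (hβ : β ≠ 0) (h : IsSimplePt β x) {n : ℕ}
    (hn : Lpt β x < n) : dig β x n = 0 := by
  rw [dig, iterate_tau_eq_zero_of_Lpt_le hβ h (by omega)]
  simp

lemma qdig_add_Lpt (h : IsSimpleBeta β) {n : ℕ} (hn : 1 ≤ n) :
    qdig β (n + Lpt β 1) = qdig β n := by
  have hmod : (n + Lpt β 1 - 1) % Lpt β 1 = (n - 1) % Lpt β 1 := by
    rw [show n + Lpt β 1 - 1 = n - 1 + Lpt β 1 by omega, Nat.add_mod_right]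
  simp only [qdig, if_pos h, hmod]

lemma qdig_eq_dig (h : IsSimpleBeta β) {n : ℕ} (hn : 1 ≤ n) (hnL : n < Lpt β 1) :
    qdig β n = dig β 1 n := by
  have hmod : (n - 1) % Lpt β 1 = n - 1 := Nat.mod_eq_of_lt (by omega)
  rw [qdig, if_pos h, hmod, if_neg (by omega), Nat.sub_add_cancel hn]

lemma qdig_Lpt (h : IsSimpleBeta β) : qdig β (Lpt β 1) = dig β 1 (Lpt β 1) - 1 := by
  have hmod : (Lpt β 1 - 1) % Lpt β 1 = Lpt β 1 - 1 :=
    Nat.mod_eq_of_lt (Nat.sub_lt (Lpt_spec h).1 one_pos)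
  rw [qdig, if_pos h, hmod, if_pos rfl]

end Digits

section Series

lemma summable_mul_pow_of_norm_le {𝕜 : Type*} [NormedDivisionRing 𝕜] [CompleteSpace 𝕜]
    {a : ℕ → 𝕜} {C : ℝ} (ha : ∀ n, ‖a n‖ ≤ C) {w : 𝕜} (hw : ‖w‖ < 1) :
    Summable fun n => a n * w ^ n :=
  .of_norm_bounded ((summable_geometric_of_lt_one (norm_nonneg w) hw).mul_left C) fun n => by
    rw [norm_mul, norm_pow]
    exact mul_le_mul_of_nonneg_right (ha n) (by positivity)

lemma one_sub_pow_ne_zero {𝕜 : Type*} [NormedDivisionRing 𝕜] {w : 𝕜} (hw : ‖w‖ < 1) {n : ℕ}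
    (hn : n ≠ 0) : 1 - w ^ n ≠ 0 :=
  sub_ne_zero.mpr fun h =>
    (pow_lt_one₀ (norm_nonneg w) hw hn).ne (by rw [← norm_pow, ← h, norm_one])

lemma norm_div_ofReal_lt_one {β : ℝ} {z : ℂ} (hz : ‖z‖ < β) : ‖z / (β : ℂ)‖ < 1 := by
  have hβ : 0 < β := (norm_nonneg z).trans_lt hz
  rwa [norm_div, Complex.norm_real, Real.norm_of_nonneg hβ.le, div_lt_one hβ]

end Series

section Expansions

variable {β : ℝ}

lemma summable_qdig_mul_pow (hβ : 0 ≤ β) {w : ℂ} (hw : ‖w‖ < 1) :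
    Summable fun n => (qdig β (n + 1) : ℂ) * w ^ (n + 1) := by
  have hbound (n : ℕ) : ‖(qdig β n : ℂ)‖ ≤ ((max |(-1 : ℤ)| |⌊β⌋| : ℤ) : ℝ) := by
    obtain ⟨h0, h1⟩ := qdig_mem_Icc hβ n
    rw [Complex.norm_intCast, ← Int.cast_abs, Int.cast_le]
    exact abs_le_max_abs_abs h0 h1
  exact (summable_nat_add_iff 1).mpr (summable_mul_pow_of_norm_le hbound hw)

lemma phi_eq_sum_range (hβ : β ≠ 0) (h : IsSimpleBeta β) (z : ℂ) :
    phi β z = ∑ n ∈ Finset.range (Lpt β 1), (dig β 1 (n + 1) : ℂ) * (z / β) ^ (n + 1) :=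
  tsum_eq_sum fun n hn => by
    rw [dig_eq_zero_of_Lpt_lt hβ h (by simp only [Finset.mem_range, not_lt] at hn; omega)]
    simp

lemma sum_range_Lpt_qdig (hβ : β ≠ 0) (h : IsSimpleBeta β) (z : ℂ) :
    ∑ n ∈ Finset.range (Lpt β 1), (qdig β (n + 1) : ℂ) * (z / β) ^ (n + 1) =
      phi β z - (z / β) ^ Lpt β 1 := by
  obtain ⟨L, hL⟩ : ∃ L, Lpt β 1 = L + 1 := ⟨_, (Nat.succ_pred_eq_of_pos (Lpt_spec h).1).symm⟩
  have hhead : ∀ n ∈ Finset.range L, (qdig β (n + 1) : ℂ) * (z / β) ^ (n + 1) =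
      (dig β 1 (n + 1) : ℂ) * (z / β) ^ (n + 1) := fun n hn => by
    rw [qdig_eq_dig h (by omega) (by rw [Finset.mem_range] at hn; omega)]
  rw [phi_eq_sum_range hβ h, hL, Finset.sum_range_succ, Finset.sum_range_succ,
    Finset.sum_congr rfl hhead, ← hL, qdig_Lpt h]
  push_cast
  ring

lemma phiHat_eq (h : IsSimpleBeta β) {z : ℂ} (hz : ‖z‖ < β) :
    phiHat β z = phi β z - (z / β) ^ Lpt β 1 + (z / β) ^ Lpt β 1 * phiHat β z := by
  have hβ : 0 < β := (norm_nonneg z).trans_lt hz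
  have hs := summable_qdig_mul_pow hβ.le (norm_div_ofReal_lt_one hz)
  have htail : ∑' n, (qdig β (n + Lpt β 1 + 1) : ℂ) * (z / β) ^ (n + Lpt β 1 + 1) =
      (z / β) ^ Lpt β 1 * phiHat β z := by
    rw [phiHat, ← tsum_mul_left]
    congr 1 with n
    rw [add_right_comm, qdig_add_Lpt h (by omega)]
    ring
  calc phiHat β z = _ := (hs.sum_add_tsum_nat_add (Lpt β 1)).symm
    _ = _ := by rw [sum_range_Lpt_qdig hβ.ne' h, htail]

end Expansions

theorem stmt10_general (β : ℝ) (hsimple : IsSimpleBeta β) (z : ℂ)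
    (hz : ‖z‖ < β) :
    (1 - (z / (β : ℂ)) ^ Lpt β 1) * (1 - phiHat β z) = 1 - phi β z ∧
    1 - (z / (β : ℂ)) ^ Lpt β 1 ≠ 0 :=
  ⟨by linear_combination -phiHat_eq hsimple hz,
    one_sub_pow_ne_zero (norm_div_ofReal_lt_one hz)
      (Nat.one_le_iff_ne_zero.mp (Lpt_spec hsimple).1)⟩

theorem stmt10 (β : ℝ) (hβ : 1 < β) (hsimple : IsSimpleBeta β) (z : ℂ)
    (hz : ‖z‖ < β) :
    (1 - (z / (β : ℂ)) ^ Lpt β 1) * (1 - phiHat β z) = 1 - phi β z ∧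
    1 - (z / (β : ℂ)) ^ Lpt β 1 ≠ 0 :=
  stmt10_general β hsimple z hz
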